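/- arXiv:1705.08674 — 2 statements merged into one kernel-verified Lean document; each statement's English description precedes it below -/
import Mathlib

section
/- For every n ≥ 0 and every vertex u of the n-cube Q_n, the distance cube polynomial satisfies D_{Q_n,u}(x,y) = (1 + x + y)^n. -/
def Qcube (n : ℕ) : SimpleGraph (Fin n → Bool) where
  Adj u v := hammingDist u v = 1
  symm := ⟨fun u v h => by rwa [hammingDist_comm] at h⟩
  loopless := ⟨fun u h => by simp [hammingDist_self] at h⟩

def daisySet {n : ℕ} (X : Set (Fin n → Bool)) : Set (Fin n → Bool) :=
  {u | ∃ x ∈ X, u ≤ x}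

noncomputable def cubeCount {V : Type*} (G : SimpleGraph V) (k : ℕ) : ℕ :=
  Set.ncard {S : Set V | Nonempty (G.induce S ≃g Qcube k)}

noncomputable def distToSet {V : Type*} (G : SimpleGraph V) (u : V) (S : Set V) : ℕ :=
  sInf (G.dist u '' S)

noncomputable def distCubeCount {V : Type*} (G : SimpleGraph V) (u : V) (k d : ℕ) : ℕ :=
  Set.ncard {S : Set V | Nonempty (G.induce S ≃g Qcube k) ∧ distToSet G u S = d}

noncomputable def wCount {V : Type*} (G : SimpleGraph V) (u : V) (d : ℕ) : ℕ :=
  Set.ncard {v : V | G.dist u v = d}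

def interval {V : Type*} (G : SimpleGraph V) (u v : V) : Set V :=
  {w | G.dist u v = G.dist u w + G.dist w v}

/-!
Every induced `Q_k` of `Q_n` is a subcube: the image of an edge in direction `j` of `Q_k` always
points in the same direction `c j` of `Q_n`, since squares go to squares, and then the image is the
subcube through one of its points spanned by the directions `c j`. Subcubes correspond to words
`g ∈ {0, 1, *}ⁿ`, the dimension being the number of `*`, and the distance from `u` being the number
of fixed coordinates that disagree with `u`. Each coordinate thus contributes independently a
factor `x` (free), `1` (fixed to `u i`) or `y` (fixed to `!u i`), giving `(1 + x + y)ⁿ`.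
-/

open Finset

lemma Finset.sum_range_sum_range_card_fiber_mul {ι R : Type*} [Fintype ι] [Semiring R]
    (a b : ι → ℕ) {N : ℕ} (ha : ∀ i, a i < N) (hb : ∀ i, b i < N) (f : ℕ → ℕ → R) :
    ∑ k ∈ range N, ∑ d ∈ range N, (#{i | a i = k ∧ b i = d} : R) * f k d =
      ∑ i, f (a i) (b i) := by
  rw [← sum_product (range N) (range N) fun p => (#{i | a i = p.1 ∧ b i = p.2} : R) * f p.1 p.2,
    ← sum_fiberwise_of_maps_to (g := fun i => (a i, b i)) (t := range N ×ˢ range N)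
      (fun i _ => by simp [ha, hb])]
  refine sum_congr rfl fun p _ => ?_
  rw [sum_congr rfl fun i hi => show f (a i) (b i) = f p.1 p.2 by rw [← (mem_filter.1 hi).2],
    sum_const, nsmul_eq_mul]
  simp [Prod.ext_iff]

namespace Hypercube

section Flip

variable {ι : Type*} [DecidableEq ι]

def flipAt (x : ι → Bool) (i : ι) : ι → Bool := Function.update x i (!x i)

@[simp] lemma flipAt_apply_self (x : ι → Bool) (i : ι) : flipAt x i i = !x i := by
  simp [flipAt]

lemma flipAt_apply_of_ne (x : ι → Bool) {i j : ι} (h : j ≠ i) : flipAt x i j = x j := by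
  simp [flipAt, h]

@[simp] lemma flipAt_flipAt (x : ι → Bool) (i : ι) : flipAt (flipAt x i) i = x := by
  simp [flipAt]

lemma flipAt_comm (x : ι → Bool) {i j : ι} (h : i ≠ j) :
    flipAt (flipAt x i) j = flipAt (flipAt x j) i := by
  funext l
  by_cases hi : l = i <;> by_cases hj : l = j <;>
    simp_all [flipAt, Function.update_apply]

lemma flipAt_injective (x : ι → Bool) : Function.Injective (flipAt x) := by
  intro i j h
  by_contra hij
  simpa [flipAt_apply_of_ne x hij] using congrFun h i

lemma eq_of_flipAt_flipAt_eq {x : ι → Bool} {p q r s : ι} (hpr : p ≠ r) (hqr : q ≠ r)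
    (h : flipAt (flipAt x r) q = flipAt (flipAt x p) s) : q = p := by
  have hsr : s = r := by
    by_contra hsr
    simpa [flipAt_apply_of_ne _ hqr.symm, flipAt_apply_of_ne _ (Ne.symm hsr),
      flipAt_apply_of_ne _ hpr.symm] using congrFun h r
  rw [hsr, flipAt_comm x hpr] at h
  exact flipAt_injective _ h

variable [Fintype ι]

lemma hammingDist_flipAt (x : ι → Bool) (i : ι) : hammingDist x (flipAt x i) = 1 := by
  rw [hammingDist, card_eq_one]
  refine ⟨i, Finset.ext fun j => ?_⟩
  by_cases hj : j = i <;> simp [hj, flipAt_apply_of_ne]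

lemma hammingDist_flipAt_add_one {x y : ι → Bool} {i : ι} (hi : x i ≠ y i) :
    hammingDist (flipAt x i) y + 1 = hammingDist x y := by
  have : ({j | flipAt x i j ≠ y j} : Finset ι) = ({j | x j ≠ y j} : Finset ι).erase i := by
    ext j
    by_cases hj : j = i
    · subst hj; cases h : x j <;> simp_all
    · simp [hj, flipAt_apply_of_ne]
  rw [hammingDist, hammingDist, this, card_erase_add_one (by simpa using hi)]

lemma hammingDist_eq_one_iff {x y : ι → Bool} : hammingDist x y = 1 ↔ ∃ i, y = flipAt x i := by
  refine ⟨fun h => ?_, fun ⟨i, hi⟩ => hi ▸ hammingDist_flipAt x i⟩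
  obtain ⟨i, hi⟩ : ∃ i, x i ≠ y i := by
    by_contra! hxy
    simp [funext hxy] at h
  refine ⟨i, (eq_of_hammingDist_eq_zero ?_).symm⟩
  have := hammingDist_flipAt_add_one hi
  omega

end Flip

variable {n : ℕ}

lemma qcube_adj_iff {x y : Fin n → Bool} : (Qcube n).Adj x y ↔ ∃ i, y = flipAt x i :=
  hammingDist_eq_one_iff

lemma qcube_adj_flipAt (x : Fin n → Bool) (i : Fin n) : (Qcube n).Adj x (flipAt x i) :=
  hammingDist_flipAt x i

lemma exists_walk_length_eq_hammingDist (x y : Fin n → Bool) :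
    ∃ p : (Qcube n).Walk x y, p.length = hammingDist x y := by
  induction h : hammingDist x y generalizing x with
  | zero => obtain rfl := eq_of_hammingDist_eq_zero h; exact ⟨.nil, rfl⟩
  | succ m ih =>
    obtain ⟨i, hi⟩ : ∃ i, x i ≠ y i := by
      by_contra! hxy
      simp [funext hxy] at h
    obtain ⟨p, hp⟩ := ih (flipAt x i) (by have := hammingDist_flipAt_add_one hi; omega)
    exact ⟨.cons (qcube_adj_flipAt x i) p, by simp [hp]⟩

lemma hammingDist_le_length {x y : Fin n → Bool} (p : (Qcube n).Walk x y) :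
    hammingDist x y ≤ p.length := by
  induction p with
  | nil => simp
  | @cons x y z hxy _ ih =>
    have h1 : hammingDist x y = 1 := hxy
    have := hammingDist_triangle x y z
    simp only [SimpleGraph.Walk.length_cons]
    omega

lemma qcube_dist (x y : Fin n → Bool) : (Qcube n).dist x y = hammingDist x y := by
  obtain ⟨p, hp⟩ := exists_walk_length_eq_hammingDist x y
  obtain ⟨q, hq⟩ := (SimpleGraph.Walk.reachable p).exists_walk_length_eq_dist
  exact le_antisymm (hp ▸ SimpleGraph.dist_le p) (hq ▸ hammingDist_le_length q)

lemma qcube_induction {P : (Fin n → Bool) → Prop} (x₀ : Fin n → Bool) (h₀ : P x₀)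
    (hflip : ∀ x i, P x → P (flipAt x i)) (x : Fin n → Bool) : P x := by
  obtain ⟨p, -⟩ := exists_walk_length_eq_hammingDist x₀ x
  induction p with
  | nil => exact h₀
  | cons hxy _ ih =>
    obtain ⟨i, rfl⟩ := qcube_adj_iff.1 hxy
    exact ih (hflip _ i h₀)

section Subcube

variable {ι : Type*}

/-- The subcube described by a word over `{0, 1, *}`: coordinate `i` is free when
`g i = none` and fixed to `b` when `g i = some b`. -/
def subcube (g : ι → Option Bool) : Set (ι → Bool) := {v | ∀ i, ∀ b ∈ g i, v i = b}

lemma getD_mem_subcube (g : ι → Option Bool) (f : ι → Bool) :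
    (fun i => (g i).getD (f i)) ∈ subcube g := by
  intro i b hb
  simp [Option.mem_def.1 hb]

lemma forall_mem_subcube_apply_eq_iff {g : ι → Option Bool} {i : ι} {b : Bool} :
    (∀ v ∈ subcube g, v i = b) ↔ g i = some b := by
  refine ⟨fun h => ?_, fun hi v hv => hv i b hi⟩
  have := h _ (getD_mem_subcube g fun _ => !b)
  cases hg : g i <;> simp_all

lemma subcube_injective : Function.Injective (subcube (ι := ι)) := fun g g' h =>
  funext fun i => Option.ext fun b => by
    rw [← forall_mem_subcube_apply_eq_iff, ← forall_mem_subcube_apply_eq_iff, h]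

variable [Fintype ι]

lemma hammingDist_comp_of_eqOn_compl_range {κ : Type*} [Fintype κ] {e : κ → ι}
    (he : Function.Injective e) {v w : ι → Bool} (hvw : ∀ i ∉ Set.range e, v i = w i) :
    hammingDist (v ∘ e) (w ∘ e) = hammingDist v w := by
  rw [hammingDist, hammingDist, ← card_map ⟨e, he⟩]
  congr 1
  ext i
  simp only [mem_map, mem_filter, mem_univ, true_and, Function.Embedding.coeFn_mk,
    Function.comp_apply]
  refine ⟨fun ⟨j, hj, hji⟩ => hji ▸ hj, fun hi => ?_⟩
  by_cases hr : i ∈ Set.range e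
  · obtain ⟨j, rfl⟩ := hr
    exact ⟨j, hi, rfl⟩
  · exact absurd (hvw i hr) hi

noncomputable def freeCoordsEquiv (g : ι → Option Bool) :
    Fin #{i | g i = none} ≃ {i // g i = none} :=
  (Fintype.equivFinOfCardEq (Fintype.card_subtype _)).symm

noncomputable def subcubeEquiv (g : ι → Option Bool) :
    subcube g ≃ (Fin #{i | g i = none} → Bool) where
  toFun v j := v.1 (freeCoordsEquiv g j)
  invFun f := ⟨fun i => if h : g i = none then f ((freeCoordsEquiv g).symm ⟨i, h⟩)
      else (g i).getD false,
    fun i b hb => by simp [Option.mem_def.1 hb]⟩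
  left_inv v := Subtype.ext <| funext fun i => by
    by_cases h : g i = none
    · simp [h]
    · obtain ⟨b, hb⟩ := Option.ne_none_iff_exists'.1 h
      simp [hb, v.2 i b hb]
  right_inv f := funext fun j => by simp [(freeCoordsEquiv g j).2]

lemma ncard_subcube (g : ι → Option Bool) : (subcube g).ncard = 2 ^ #{i | g i = none} := by
  rw [← Nat.card_coe_set_eq, Nat.card_congr (subcubeEquiv g)]
  simp

end Subcube

noncomputable def subcubeIso (g : Fin n → Option Bool) :
    (Qcube n).induce (subcube g) ≃g Qcube #{i | g i = none} where
  toEquiv := subcubeEquiv g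
  map_rel_iff' {v w} := by
    change hammingDist (v.1 ∘ Subtype.val ∘ freeCoordsEquiv g)
      (w.1 ∘ Subtype.val ∘ freeCoordsEquiv g) = 1 ↔ hammingDist v.1 w.1 = 1
    rw [hammingDist_comp_of_eqOn_compl_range
      (Subtype.val_injective.comp (freeCoordsEquiv g).injective)]
    intro i hi
    obtain ⟨b, hb⟩ := Option.ne_none_iff_exists'.1 fun h =>
      hi ⟨(freeCoordsEquiv g).symm ⟨i, h⟩, by simp⟩
    rw [v.2 i b hb, w.2 i b hb]

lemma distToSet_subcube (u : Fin n → Bool) (g : Fin n → Option Bool) :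
    distToSet (Qcube n) u (subcube g) = #{i | g i = some (!u i)} := by
  have hnearest : (Qcube n).dist u (fun i => (g i).getD (u i)) = #{i | g i = some (!u i)} := by
    rw [qcube_dist, hammingDist]
    congr 1
    ext i
    simp only [mem_filter, mem_univ, true_and]
    rcases g i with _ | _ | _ <;> cases u i <;> simp
  refine le_antisymm (Nat.sInf_le ⟨_, getD_mem_subcube g u, hnearest⟩) ?_
  refine le_csInf ⟨_, _, getD_mem_subcube g u, rfl⟩ ?_
  rintro _ ⟨v, hv, rfl⟩
  rw [qcube_dist, hammingDist]
  refine card_le_card fun i => ?_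
  simp only [mem_filter, mem_univ, true_and]
  intro hi
  rw [hv i _ hi]
  cases u i <;> simp

variable {k : ℕ}

lemma exists_map_flipAt_eq (F : Qcube k →g Qcube n) (hF : Function.Injective F) :
    ∃ c : Fin k → Fin n, ∀ a j, F (flipAt a j) = flipAt (F a) (c j) := by
  choose C hC using fun a j => qcube_adj_iff.1 (F.map_adj (qcube_adj_flipAt a j))
  have hC_inj : ∀ a, Function.Injective (C a) := fun a j j' h =>
    flipAt_injective a (hF (by rw [hC, hC, h]))
  have hC_back : ∀ a j, C (flipAt a j) j = C a j := fun a j =>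
    flipAt_injective (flipAt (F a) (C a j)) (by rw [flipAt_flipAt, ← hC a j, ← hC, flipAt_flipAt])
  have hC_flip : ∀ a j j', C (flipAt a j') j = C a j := by
    intro a j j'
    rcases eq_or_ne j j' with rfl | hjj'
    · exact hC_back a j
    refine eq_of_flipAt_flipAt_eq (x := F a) (s := C (flipAt a j) j')
      ((hC_inj a).ne hjj') ?_ ?_
    · rw [← hC_back a j']
      exact (hC_inj _).ne hjj'
    · rw [← hC, ← hC, ← hC, ← hC, flipAt_comm a hjj']
  refine ⟨C 0, fun a j => ?_⟩
  rw [hC, qcube_induction (P := fun a => C a = C 0) 0 rfl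
    (fun a j' ha => funext fun j => (hC_flip a j j').trans (congrFun ha j)) a]

theorem exists_range_eq_subcube (F : Qcube k →g Qcube n) (hF : Function.Injective F) :
    ∃ g : Fin n → Option Bool, #{i | g i = none} = k ∧ Set.range F = subcube g := by
  obtain ⟨c, hc⟩ := exists_map_flipAt_eq F hF
  have hc_inj : Function.Injective c := fun j j' h =>
    flipAt_injective (0 : Fin k → Bool) (hF (by rw [hc, hc, h]))
  let g : Fin n → Option Bool := fun i => if i ∈ Set.range c then none else some (F 0 i)
  have hcard : #{i | g i = none} = k := by
    have : ({i | g i = none} : Finset (Fin n)) = univ.image c := by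
      ext i
      simp [g]
    rw [this, card_image_of_injective _ hc_inj, card_univ, Fintype.card_fin]
  refine ⟨g, hcard, Set.eq_of_subset_of_ncard_le ?_ ?_ (Set.toFinite _)⟩
  · rintro _ ⟨a, rfl⟩
    refine qcube_induction (P := fun a => F a ∈ subcube g) 0 ?_ ?_ a
    · intro i b hb
      simp_all [g]
    · intro a j ha i b hb
      have hi : i ∉ Set.range c := by rintro ⟨j', rfl⟩; simp [g] at hb
      rw [hc, flipAt_apply_of_ne _ fun h => hi ⟨j, h.symm⟩]
      exact ha i b hb
  · rw [ncard_subcube, hcard, Set.ncard_range_of_injective hF]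
    simp

lemma exists_subcube_of_iso {S : Set (Fin n → Bool)} (φ : (Qcube n).induce S ≃g Qcube k) :
    ∃ g : Fin n → Option Bool, #{i | g i = none} = k ∧ S = subcube g := by
  have hrange : Set.range (fun a => (φ.symm a : Fin n → Bool)) = S :=
    (φ.symm.surjective.range_comp Subtype.val).trans Subtype.range_coe
  obtain ⟨g, hk, hg⟩ := exists_range_eq_subcube
    ((SimpleGraph.Embedding.induce S).toHom.comp φ.symm.toEmbedding.toHom)
    (Subtype.val_injective.comp φ.symm.injective)
  exact ⟨g, hk, hrange.symm.trans hg⟩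

lemma distCubeCount_qcube (u : Fin n → Bool) (k d : ℕ) :
    distCubeCount (Qcube n) u k d =
      #{g : Fin n → Option Bool | #{i | g i = none} = k ∧ #{i | g i = some (!u i)} = d} := by
  have hcubes : {S | Nonempty ((Qcube n).induce S ≃g Qcube k) ∧ distToSet (Qcube n) u S = d} =
      subcube '' {g | #{i | g i = none} = k ∧ #{i | g i = some (!u i)} = d} := by
    ext S
    constructor
    · rintro ⟨⟨φ⟩, hd⟩
      obtain ⟨g, hk, rfl⟩ := exists_subcube_of_iso φ
      exact ⟨g, ⟨hk, distToSet_subcube u g ▸ hd⟩, rfl⟩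
    · rintro ⟨g, ⟨rfl, rfl⟩, rfl⟩
      exact ⟨⟨subcubeIso g⟩, distToSet_subcube u g⟩
  rw [distCubeCount, hcubes, Set.ncard_image_of_injective _ subcube_injective,
    ← Set.ncard_coe_finset]
  simp

lemma sum_pow_card_free_mul_pow_card_opposite {ι R : Type*} [Fintype ι] [DecidableEq ι]
    [CommSemiring R] (u : ι → Bool) (x y : R) :
    ∑ g : ι → Option Bool, x ^ #{i | g i = none} * y ^ #{i | g i = some (!u i)} =
      (1 + x + y) ^ Fintype.card ι := by
  have hprod : ∀ g : ι → Option Bool, x ^ #{i | g i = none} * y ^ #{i | g i = some (!u i)} =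
      ∏ i, (if g i = none then x else 1) * (if g i = some (!u i) then y else 1) := fun g => by
    rw [prod_mul_distrib, prod_ite, prod_ite, prod_const_one, prod_const_one, prod_const,
      prod_const, mul_one, mul_one]
  rw [sum_congr rfl fun g _ => hprod g, ← Fintype.prod_sum fun i (t : Option Bool) =>
    (if t = none then x else 1) * (if t = some (!u i) then y else 1), ← card_univ, ← prod_const]
  refine prod_congr rfl fun i _ => ?_
  rw [Fintype.sum_option, Fintype.sum_bool]
  cases u i <;> simp <;> ring

end Hypercube

theorem distCubePolynomial_of_hypercube (n : ℕ) (u : Fin n → Bool) (x y : ℝ) :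
    ∑ k ∈ Finset.range (n + 1), ∑ d ∈ Finset.range (n + 1),
      (distCubeCount (Qcube n) u k d : ℝ) * x ^ k * y ^ d = (1 + x + y) ^ n := by
  simp_rw [Hypercube.distCubeCount_qcube, mul_assoc]
  have hle : ∀ s : Finset (Fin n), #s < n + 1 := fun s =>
    Nat.lt_succ_of_le ((card_le_univ s).trans_eq (Fintype.card_fin n))
  rw [sum_range_sum_range_card_fiber_mul _ _ (fun _ => hle _) (fun _ => hle _)
    fun k d => x ^ k * y ^ d, Hypercube.sum_pow_card_free_mul_pow_card_opposite, Fintype.card_fin]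
end

section
/- For every n ≥ 1, the cube polynomial of the Fibonacci cube Γ_n satisfies C_{Γ_n}(x) = Σ_{k=0}^{⌊(n+1)/2⌋} binom(n−k+1, k) (1 + x)^k. -/
def fibSet (n : ℕ) : Set (Fin n → Bool) :=
  {u | ∀ i j : Fin n, (j : ℕ) = (i : ℕ) + 1 → ¬(u i = true ∧ u j = true)}

lemma zero_mem_fibSet (n : ℕ) : (fun _ => false) ∈ fibSet n := by
  intro i j _ h
  simp at h

/-!
A `k`-cube of `Γ_n` is a subcube `{w | w = t off D}` with `D ⊆ ones t` and top vertex `t` a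
Fibonacci word: an injective homomorphism `Q_k → Q_n` sends each coordinate direction of `Q_k`
to a fixed coordinate of `Q_n`, because opposite edges of a square of `Q_n` flip the same
coordinate, and Fibonacci words form a down-set. Hence `c_k(Γ_n) = ∑ₜ C(|t|, k)` and
`C_{Γ_n}(x) = ∑ₜ (1 + x)^|t|`. Splitting off the first letter, the weight enumerator
`Fₙ(y) = ∑ₜ y^|t|` of Fibonacci words satisfies `Fₙ₊₂ = Fₙ₊₁ + y Fₙ`, a recursion also satisfied
by `∑_{i + j = n + 1} C(i, j) yʲ`.
-/

open Finset Function

lemma hammingDist_extend {ι κ β : Type*} [Fintype ι] [Fintype κ] [DecidableEq β]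
    {d : ι → κ} (hd : Injective d) (u v : ι → β) (c : κ → β) :
    hammingDist (extend d u c) (extend d v c) = hammingDist u v := by
  rw [hammingDist, hammingDist, ← card_map ⟨d, hd⟩]
  congr 1
  ext j
  by_cases h : ∃ i, d i = j
  · obtain ⟨i, rfl⟩ := h
    simp [hd.extend_apply]
  · simp_all

namespace Qcube

variable {n k : ℕ}

def toggle (u : Fin n → Bool) (i : Fin n) : Fin n → Bool := update u i (!u i)

@[simp] lemma toggle_apply_self (u : Fin n → Bool) (i : Fin n) : toggle u i i = !u i := by
  simp [toggle]

@[simp] lemma toggle_apply_of_ne {u : Fin n → Bool} {i j : Fin n} (h : j ≠ i) :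
    toggle u i j = u j := by
  simp [toggle, h]

@[simp] lemma toggle_toggle (u : Fin n → Bool) (i : Fin n) : toggle (toggle u i) i = u := by
  ext j; by_cases h : j = i <;> simp [h]

lemma toggle_comm (u : Fin n → Bool) (i j : Fin n) :
    toggle (toggle u i) j = toggle (toggle u j) i := by
  ext l; by_cases hi : l = i <;> by_cases hj : l = j <;> simp_all

lemma toggle_injective (u : Fin n → Bool) : Injective (toggle u) := by
  intro i j h
  by_contra hij
  simpa [hij] using congrFun h i

lemma adj_iff {u v : Fin n → Bool} : (Qcube n).Adj u v ↔ ∃ i, v = toggle u i := by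
  change hammingDist u v = 1 ↔ _
  rw [hammingDist, card_eq_one]
  refine exists_congr fun i => ⟨fun h => ?_, fun h => ?_⟩ <;> ext j
  · have hj := Finset.ext_iff.mp h j
    simp only [mem_filter, mem_univ, true_and, mem_singleton] at hj
    by_cases hji : j = i
    · subst hji
      rw [toggle_apply_self]
      revert hj; cases u j <;> cases v j <;> simp
    · rw [toggle_apply_of_ne hji]
      by_contra hne
      exact hji (hj.mp (Ne.symm hne))
  · subst h; by_cases hj : j = i <;> simp [hj]

/-- In a square of the cube, opposite edges flip the same coordinate. -/
lemma eq_of_toggle_toggle_eq {p : Fin n → Bool} {a b α β : Fin n}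
    (h : toggle (toggle p a) β = toggle (toggle p b) α) (hab : a ≠ b) (haβ : a ≠ β) : α = a := by
  by_contra hαa
  simpa [hab, haβ, Ne.symm hαa] using congrFun h a

lemma toggle_induction {P : (Fin k → Bool) → Prop} (bot : P ⊥)
    (step : ∀ u i, P u → P (toggle u i)) (u : Fin k → Bool) : P u := by
  suffices ∀ s : Finset (Fin k), P fun i => decide (i ∈ s) by simpa using this {i | u i}
  intro s
  induction s using Finset.induction_on with
  | empty => simp only [Finset.notMem_empty, decide_false]; exact bot
  | insert a s has ih =>
    convert step _ a ih using 1
    ext i; by_cases h : i = a <;> simp [h, has]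

lemma exists_map_toggle (f : Qcube k →g Qcube n) (hf : Injective f) :
    ∃ d : Fin k → Fin n, Injective d ∧ ∀ u i, f (toggle u i) = toggle (f u) (d i) := by
  choose dir hdir using fun u i => adj_iff.mp (f.map_adj (adj_iff.mpr ⟨i, rfl⟩) :
    (Qcube n).Adj (f u) (f (toggle u i)))
  have dir_toggle : ∀ u j, dir (toggle u j) = dir u := by
    intro u j
    ext1 i
    by_cases hij : i = j
    · subst hij
      apply toggle_injective (f u)
      have h := hdir (toggle u i) i
      rw [toggle_toggle, hdir u i] at h
      nth_rewrite 1 [h]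
      simp
    · have square := hdir (toggle u j) i
      rw [← toggle_comm, hdir, hdir u i, hdir u j] at square
      refine eq_of_toggle_toggle_eq square (fun h => hij ?_) (fun h => hij ?_)
      · exact toggle_injective u (hf (by rw [hdir, hdir, h]))
      · apply toggle_injective u
        have := hdir (toggle u i) j
        rw [hdir u i, ← h, toggle_toggle] at this
        simpa using congrArg (toggle · j) (hf this)
  have dir_eq : ∀ u, dir u = dir ⊥ := toggle_induction rfl fun u j h => (dir_toggle u j).trans h
  refine ⟨dir ⊥, fun i j h => toggle_injective ⊥ (hf ?_), fun u i => by rw [hdir, dir_eq]⟩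
  rw [hdir, hdir, h]

def subcube (c : Fin n → Bool) (D : Finset (Fin n)) : Set (Fin n → Bool) :=
  {w | ∀ j ∉ D, w j = c j}

noncomputable def extendEmbedding (d : Fin k ↪ Fin n) (c : Fin n → Bool) :
    Qcube k ↪g Qcube n where
  toFun u := extend d u c
  inj' u v h := by simpa only [extend_comp d.injective] using congrArg (· ∘ d) h
  map_rel_iff' {u v} := by
    change hammingDist (extend d u c) (extend d v c) = 1 ↔ hammingDist u v = 1
    rw [hammingDist_extend d.injective]

lemma range_extendEmbedding (d : Fin k ↪ Fin n) (c : Fin n → Bool) :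
    Set.range (extendEmbedding d c) = subcube c (univ.map d) := by
  ext w
  constructor
  · rintro ⟨u, rfl⟩ j hj
    exact extend_apply' _ _ _ (by simpa using hj)
  · intro hw
    refine ⟨w ∘ d, funext fun j => ?_⟩
    by_cases h : ∃ i, d i = j
    · obtain ⟨i, rfl⟩ := h
      exact d.injective.extend_apply _ _ _
    · exact (extend_apply' _ _ _ h).trans (hw j (by simpa using h)).symm

lemma subcube_iso (c : Fin n → Bool) (D : Finset (Fin n)) :
    Nonempty ((Qcube n).induce (subcube c D) ≃g Qcube #D) := by
  have hD : univ.map (D.orderEmbOfFin rfl).toEmbedding = D := by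
    apply coe_injective
    simp
  have hrange := range_extendEmbedding (D.orderEmbOfFin rfl).toEmbedding c
  rw [hD] at hrange
  rw [← hrange]
  exact ⟨(extendEmbedding _ c).isoInduceRange.symm⟩

lemma exists_eq_subcube_of_iso {A : Set (Fin n → Bool)} (e : (Qcube n).induce A ≃g Qcube k) :
    ∃ c D, #D = k ∧ A = subcube c D := by
  let f : Qcube k →g Qcube n := (SimpleGraph.Embedding.induce A).toHom.comp e.symm.toHom
  have hf : Injective f := Subtype.val_injective.comp e.symm.injective
  obtain ⟨d, hd, hfd⟩ := exists_map_toggle f hf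
  refine ⟨f ⊥, univ.map ⟨d, hd⟩, by simp, ?_⟩
  have hsub : A ⊆ subcube (f ⊥) (univ.map ⟨d, hd⟩) := by
    intro a ha
    obtain ⟨u, rfl⟩ : ∃ u, f u = a := ⟨e ⟨a, ha⟩, by simp [f]⟩
    clear ha
    induction u using toggle_induction with
    | bot => exact fun _ _ => rfl
    | step u i ih =>
      intro j hj
      rw [hfd, toggle_apply_of_ne fun h => by simp_all, ih j hj]
  refine Set.eq_of_subset_of_ncard_le hsub ?_ (Set.toFinite _)
  obtain ⟨e'⟩ := subcube_iso (f ⊥) (univ.map ⟨d, hd⟩)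
  rw [← Nat.card_coe_set_eq, ← Nat.card_coe_set_eq, Nat.card_congr e'.toEquiv,
    Nat.card_congr e.toEquiv, card_map, card_univ, Fintype.card_fin]

def ones (u : Fin n → Bool) : Finset (Fin n) := {i | u i = true}

@[simp] lemma mem_ones {u : Fin n → Bool} {i : Fin n} : i ∈ ones u ↔ u i = true := by
  simp [ones]

lemma self_mem_subcube (c : Fin n → Bool) (D : Finset (Fin n)) : c ∈ subcube c D :=
  fun _ _ => rfl

lemma toggle_mem_subcube_iff {c : Fin n → Bool} {D : Finset (Fin n)} {j : Fin n} :
    toggle c j ∈ subcube c D ↔ j ∈ D :=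
  ⟨fun h => by_contra fun hj => by simpa using h j hj,
    fun hj i hi => toggle_apply_of_ne (ne_of_mem_of_not_mem hj hi).symm⟩

lemma le_of_mem_subcube {t w : Fin n → Bool} {D : Finset (Fin n)} (hD : D ⊆ ones t)
    (hw : w ∈ subcube t D) : w ≤ t := by
  intro j
  by_cases hj : j ∈ D
  · simp [mem_ones.mp (hD hj)]
  · exact (hw j hj).le

lemma subcube_subset_iff {L : Set (Fin n → Bool)} (hL : IsLowerSet L) {t : Fin n → Bool}
    {D : Finset (Fin n)} (hD : D ⊆ ones t) : subcube t D ⊆ L ↔ t ∈ L :=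
  ⟨fun h => h (self_mem_subcube t D), fun ht _ hw => hL (le_of_mem_subcube hD hw) ht⟩

lemma exists_subset_ones_subcube_eq (c : Fin n → Bool) (D : Finset (Fin n)) :
    ∃ t, D ⊆ ones t ∧ subcube c D = subcube t D :=
  ⟨fun j => c j || decide (j ∈ D), fun j hj => by simp [hj],
    Set.ext fun w => forall₂_congr fun j hj => by simp [hj]⟩

lemma eq_and_eq_of_subcube_eq {t t' : Fin n → Bool} {D D' : Finset (Fin n)} (hD : D ⊆ ones t)
    (hD' : D' ⊆ ones t') (h : subcube t D = subcube t' D') : t = t' ∧ D = D' := by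
  have htt' : t = t' := le_antisymm
    (le_of_mem_subcube hD' (h ▸ self_mem_subcube t D))
    (le_of_mem_subcube hD (h ▸ self_mem_subcube t' D'))
  subst htt'
  exact ⟨rfl, ext fun j => by rw [← toggle_mem_subcube_iff, h, toggle_mem_subcube_iff]⟩

lemma card_ones_cons (a : Bool) (t : Fin n → Bool) :
    #(ones (Fin.cons a t)) = a.toNat + #(ones t) := by
  simp only [ones, card_filter, Fin.sum_univ_succ, Fin.cons_zero, Fin.cons_succ]
  cases a <;> simp

end Qcube

open Qcube

lemma isLowerSet_fibSet (n : ℕ) : IsLowerSet (fibSet n) := fun _ _ hle hv i j hij h =>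
  hv i j hij ⟨Bool.le_iff_imp.mp (hle i) h.1, Bool.le_iff_imp.mp (hle j) h.2⟩

instance (n : ℕ) : DecidablePred (· ∈ fibSet n) :=
  fun _ => inferInstanceAs (Decidable (∀ _ _ : Fin n, _))

lemma SimpleGraph.ncard_setOf_induce_induce_iso {V W : Type*} (G : SimpleGraph V) (A : Set V)
    (H : SimpleGraph W) :
    {S : Set A | Nonempty ((G.induce A).induce S ≃g H)}.ncard =
      {S : Set V | S ⊆ A ∧ Nonempty (G.induce S ≃g H)}.ncard := by
  have iso (S : Set A) : (G.induce A).induce S ≃g G.induce (Subtype.val '' S) :=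
    ⟨Equiv.Set.image _ S Subtype.val_injective, Iff.rfl⟩
  rw [← Set.ncard_image_of_injective _ (Set.image_injective.mpr Subtype.val_injective)]
  congr 1
  ext S
  constructor
  · rintro ⟨S, ⟨e⟩, rfl⟩
    exact ⟨Subtype.coe_image_subset A S, ⟨(iso S).symm.trans e⟩⟩
  · rintro ⟨hS, ⟨e⟩⟩
    have himg : Subtype.val '' (Subtype.val ⁻¹' S : Set A) = S :=
      Set.image_preimage_eq_of_subset (by simpa using hS)
    refine ⟨Subtype.val ⁻¹' S, ⟨(iso _).trans ?_⟩, himg⟩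
    rwa [himg]

lemma cubeCount_fibonacciCube (n k : ℕ) :
    cubeCount ((Qcube n).induce (fibSet n)) k =
      ∑ t with t ∈ fibSet n, (#(ones t)).choose k := by
  have hset : {A | A ⊆ fibSet n ∧ Nonempty ((Qcube n).induce A ≃g Qcube k)} =
      (({t | t ∈ fibSet n} : Finset _).sigma fun t => (ones t).powersetCard k).image
        fun p => subcube p.1 p.2 := by
    ext A
    simp only [coe_image, Set.mem_image, mem_coe, mem_sigma, mem_filter, mem_univ, true_and,
      mem_powersetCard, Sigma.exists]
    constructor
    · rintro ⟨hA, ⟨e⟩⟩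
      obtain ⟨c, D, rfl, rfl⟩ := exists_eq_subcube_of_iso e
      obtain ⟨t, hD, ht⟩ := exists_subset_ones_subcube_eq c D
      rw [ht, subcube_subset_iff (isLowerSet_fibSet n) hD] at hA
      exact ⟨t, D, ⟨hA, hD, rfl⟩, ht.symm⟩
    · rintro ⟨t, D, ⟨ht, hD, rfl⟩, rfl⟩
      exact ⟨(subcube_subset_iff (isLowerSet_fibSet n) hD).mpr ht, subcube_iso t D⟩
  rw [cubeCount, SimpleGraph.ncard_setOf_induce_induce_iso, hset, Set.ncard_coe_finset,
    card_image_of_injOn, card_sigma]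
  · simp_rw [card_powersetCard]
  · rintro ⟨t, D⟩ hp ⟨t', D'⟩ hp' h
    simp only [coe_sigma, Set.mem_sigma_iff, mem_coe, mem_powersetCard] at hp hp'
    obtain ⟨rfl, rfl⟩ := eq_and_eq_of_subcube_eq hp.2.1 hp'.2.1 h
    rfl

lemma cons_mem_fibSet_iff {n : ℕ} {a : Bool} {t : Fin n → Bool} :
    Fin.cons a t ∈ fibSet (n + 1) ↔
      t ∈ fibSet n ∧ ∀ i : Fin n, (i : ℕ) = 0 → a = true → t i = false := by
  simp [fibSet, Fin.forall_fin_succ, and_comm]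

lemma Fintype.sum_fin_succ_bool {n : ℕ} {M : Type*} [AddCommMonoid M]
    (f : (Fin (n + 1) → Bool) → M) :
    ∑ u, f u = ∑ t, f (Fin.cons true t) + ∑ t, f (Fin.cons false t) := by
  rw [← (Fin.consEquiv fun _ => Bool).sum_comp, Fintype.sum_prod_type, Fintype.sum_bool]
  rfl

lemma sum_fibSet_add_two {R : Type*} [CommSemiring R] (n : ℕ) (y : R) :
    ∑ u with u ∈ fibSet (n + 2), y ^ #(ones u) =
      ∑ u with u ∈ fibSet (n + 1), y ^ #(ones u) + y * ∑ u with u ∈ fibSet n, y ^ #(ones u) := by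
  simp only [sum_filter, mul_sum]
  rw [Fintype.sum_fin_succ_bool, Fintype.sum_fin_succ_bool, add_comm]
  simp [cons_mem_fibSet_iff, card_ones_cons, pow_add]

theorem sum_fibSet_pow_card_ones {R : Type*} [CommSemiring R] (n : ℕ) (y : R) :
    ∑ u with u ∈ fibSet n, y ^ #(ones u) =
      ∑ p ∈ antidiagonal (n + 1), (p.1.choose p.2 : R) * y ^ p.2 := by
  induction n using Nat.twoStepInduction with
  | zero => simp [fibSet, ones, Nat.sum_antidiagonal_succ]
  | one =>
    simp [fibSet, ones, filter_singleton, Fintype.sum_fin_succ_bool, Nat.sum_antidiagonal_succ,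
      add_comm]
  | more n ih₀ ih₁ =>
    rw [sum_fibSet_add_two, ih₀, ih₁, Nat.sum_antidiagonal_succ' (n := n + 1),
      Nat.sum_antidiagonal_succ' (n := n + 2), Nat.sum_antidiagonal_succ (n := n + 1)]
    simp only [Nat.choose_succ_succ, Nat.choose_zero_succ, Nat.cast_add, Nat.cast_zero, zero_mul,
      zero_add, add_mul, sum_add_distrib, mul_sum, mul_left_comm y, ← pow_succ',
      Nat.choose_zero_right, Nat.succ_eq_add_one]
    ring

lemma sum_antidiagonal_choose_mul_pow {R : Type*} [CommSemiring R] (n : ℕ) (y : R) :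
    ∑ p ∈ antidiagonal (n + 1), (p.1.choose p.2 : R) * y ^ p.2 =
      ∑ k ∈ range ((n + 1) / 2 + 1), ((n - k + 1).choose k : R) * y ^ k := by
  rw [← Nat.sum_antidiagonal_swap]
  simp only [Prod.fst_swap, Prod.snd_swap]
  rw [Nat.sum_antidiagonal_eq_sum_range_succ (fun i j => (j.choose i : R) * y ^ i)]
  refine (sum_subset_zero_on_sdiff (range_subset_range.mpr (by omega)) ?_ ?_).symm
  · intro k hk
    simp only [mem_sdiff, mem_range] at hk
    rw [Nat.choose_eq_zero_of_lt (by omega), Nat.cast_zero, zero_mul]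
  · intro k hk
    simp only [mem_range] at hk
    rw [show n - k + 1 = n + 1 - k by omega]

lemma sum_range_choose_mul_pow {R : Type*} [CommSemiring R] {m N : ℕ} (h : m < N) (x : R) :
    ∑ k ∈ range N, (m.choose k : R) * x ^ k = (1 + x) ^ m := by
  rw [add_comm, add_pow]
  refine (sum_subset (range_subset_range.mpr h) fun k _ hk => ?_).symm.trans
    (sum_congr rfl fun k _ => ?_)
  · simp_all [Nat.choose_eq_zero_of_lt]
  · ring

theorem cubePolynomial_of_Fibonacci_cube_general (n : ℕ) (x : ℝ) :
    ∑ k ∈ Finset.range (2 ^ n + 1),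
      (cubeCount ((Qcube n).induce (fibSet n)) k : ℝ) * x ^ k =
    ∑ k ∈ Finset.range ((n + 1) / 2 + 1), ((n - k + 1).choose k : ℝ) * (1 + x) ^ k := by
  have hones (t : Fin n → Bool) : #(ones t) < 2 ^ n + 1 :=
    ((card_filter_le _ _).trans (card_fin n).le).trans_lt (Nat.lt_two_pow_self.trans (by omega))
  simp_rw [cubeCount_fibonacciCube, Nat.cast_sum, sum_mul]
  rw [sum_comm, sum_congr rfl fun t _ => sum_range_choose_mul_pow (hones t) x,
    sum_fibSet_pow_card_ones, sum_antidiagonal_choose_mul_pow]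

theorem cubePolynomial_of_Fibonacci_cube (n : ℕ) (hn : 1 ≤ n) (x : ℝ) :
    ∑ k ∈ Finset.range (2 ^ n + 1),
      (cubeCount ((Qcube n).induce (fibSet n)) k : ℝ) * x ^ k =
    ∑ k ∈ Finset.range ((n + 1) / 2 + 1), ((n - k + 1).choose k : ℝ) * (1 + x) ^ k :=
  cubePolynomial_of_Fibonacci_cube_general n x
end
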